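/- arXiv:2212.13960 — 7 statements merged into one kernel-verified Lean document; each statement's English description precedes it below -/
import Mathlib

section
/- Quantitative lower bound on the small divisors: let ω ∈ ℝ² satisfy the Diophantine condition with constants ν ∈ (0,1] and τ ≥ 1, and let λ ∈ ℝ with 0 < λ < 1. Then for every k ∈ ℤ² \ {0}, |e^{2πi ω·k} − (1+λ) + λ e^{−2πi ω·k}| ≥ 4(1−λ) ν |k|^{−τ}, where |k| = max(|k₁|,|k₂|). -/
/-!
Since `e^{iθ} e^{-iθ} = 1`, the small divisor factors as `(e^{iθ} - 1)(1 - λ e^{-iθ})` with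
`θ = 2π ω·k`. The second factor has modulus at least `1 - λ`. The first has modulus
`2 |sin (π ω·k)|`, which by Jordan's inequality `sin t ≥ 2t/π` on `[0, π/2]` is at least four
times the distance from `ω·k` to the nearest integer, and the Diophantine condition bounds that
distance below by `ν |k|^{-τ}`.
-/

open Complex Real

theorem exp_sub_one_add_mul_exp_neg (z l : ℂ) :
    exp z - (1 + l) + l * exp (-z) = (exp z - 1) * (1 - l * exp (-z)) := by
  have h : exp z * exp (-z) = 1 := by rw [← Complex.exp_add, add_neg_cancel, Complex.exp_zero]
  linear_combination l * h

theorem one_sub_le_norm_one_sub_mul {l : ℝ} (hl : 0 ≤ l) {u : ℂ} (hu : ‖u‖ ≤ 1) :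
    1 - l ≤ ‖1 - l * u‖ :=
  calc 1 - l ≤ ‖(1 : ℂ)‖ - ‖(l : ℂ) * u‖ := by
        rw [norm_one, norm_mul, Complex.norm_of_nonneg hl]
        nlinarith
    _ ≤ ‖1 - l * u‖ := norm_sub_norm_le _ _

theorem two_mul_abs_sub_round_le_abs_sin_pi_mul (x : ℝ) :
    2 * |x - round x| ≤ |Real.sin (π * x)| := by
  have hx : |π * (x - round x)| ≤ π / 2 := by
    rw [abs_mul, abs_of_pos pi_pos]
    nlinarith [abs_sub_round x, pi_pos]
  have hsin : |Real.sin (π * x)| = |Real.sin (π * (x - round x))| := by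
    rw [mul_sub, mul_comm π (round x : ℝ), Real.sin_sub_int_mul_pi, abs_mul, abs_neg_one_zpow,
      one_mul]
  calc 2 * |x - round x| = 2 / π * |π * (x - round x)| := by
        rw [abs_mul, abs_of_pos pi_pos]; field_simp
    _ ≤ |Real.sin (π * x)| := hsin ▸ mul_abs_le_abs_sin hx

theorem norm_exp_two_pi_mul_I_sub_one (x : ℝ) :
    ‖exp (2 * π * I * x) - 1‖ = 2 * |Real.sin (π * x)| := by
  have h := norm_exp_I_mul_ofReal_sub_one (2 * π * x)
  push_cast at h
  rw [show 2 * π * I * x = I * (2 * π * x) by ring, h, norm_mul, Real.norm_two, Real.norm_eq_abs,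
    show 2 * π * x / 2 = π * x by ring]

theorem four_mul_abs_sub_round_le_norm_exp_sub_one (x : ℝ) :
    4 * |x - round x| ≤ ‖exp (2 * π * I * x) - 1‖ := by
  rw [norm_exp_two_pi_mul_I_sub_one]
  linarith [two_mul_abs_sub_round_le_abs_sin_pi_mul x]

theorem small_divisor_lower_bound_general (ω : ℝ × ℝ) (ν τ l : ℝ)
    (hl0 : 0 < l) (hl1 : l < 1)
    (hdio : ∀ m₁ : ℤ × ℤ, m₁ ≠ 0 → ∀ m₂ : ℤ,
      ν * ((max m₁.1.natAbs m₁.2.natAbs : ℕ) : ℝ) ^ (-τ) ≤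
        |(m₁.1 : ℝ) * ω.1 + (m₁.2 : ℝ) * ω.2 + m₂|) :
    ∀ k : ℤ × ℤ, k ≠ 0 →
      4 * (1 - l) * ν * ((max k.1.natAbs k.2.natAbs : ℕ) : ℝ) ^ (-τ) ≤
        ‖(Complex.exp (2 * π * Complex.I * ((ω.1 : ℂ) * k.1 + (ω.2 : ℂ) * k.2))
            - (1 + (l : ℂ))
            + (l : ℂ) * Complex.exp (-(2 * π * Complex.I * ((ω.1 : ℂ) * k.1 + (ω.2 : ℂ) * k.2))))‖ := by
  intro k hk
  set x : ℝ := ω.1 * k.1 + ω.2 * k.2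
  have hexp : 2 * π * I * ((ω.1 : ℂ) * k.1 + (ω.2 : ℂ) * k.2) = 2 * π * I * x := by
    simp only [x]; push_cast; ring
  have hdist : ν * ((max k.1.natAbs k.2.natAbs : ℕ) : ℝ) ^ (-τ) ≤ |x - round x| := by
    convert hdio k hk (-round x) using 2
    push_cast; ring
  have hsecond : 1 - l ≤ ‖1 - l * exp (-(2 * π * I * x))‖ :=
    one_sub_le_norm_one_sub_mul hl0.le <| by rw [Complex.norm_exp]; simp
  rw [hexp, exp_sub_one_add_mul_exp_neg, norm_mul]
  calc 4 * (1 - l) * ν * ((max k.1.natAbs k.2.natAbs : ℕ) : ℝ) ^ (-τ)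
      = 4 * (ν * ((max k.1.natAbs k.2.natAbs : ℕ) : ℝ) ^ (-τ)) * (1 - l) := by ring
    _ ≤ ‖exp (2 * π * I * x) - 1‖ * ‖1 - l * exp (-(2 * π * I * x))‖ :=
      mul_le_mul (by linarith [four_mul_abs_sub_round_le_norm_exp_sub_one x]) hsecond
        (by linarith) (norm_nonneg _)

/-- Quantitative lower bound on the small divisors for Diophantine frequencies. -/
theorem small_divisor_lower_bound (ω : ℝ × ℝ) (ν τ l : ℝ)
    (hν : 0 < ν) (hν1 : ν ≤ 1) (hτ : 1 ≤ τ) (hl0 : 0 < l) (hl1 : l < 1)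
    (hdio : ∀ m₁ : ℤ × ℤ, m₁ ≠ 0 → ∀ m₂ : ℤ,
      ν * ((max m₁.1.natAbs m₁.2.natAbs : ℕ) : ℝ) ^ (-τ) ≤
        |(m₁.1 : ℝ) * ω.1 + (m₁.2 : ℝ) * ω.2 + m₂|) :
    ∀ k : ℤ × ℤ, k ≠ 0 →
      4 * (1 - l) * ν * ((max k.1.natAbs k.2.natAbs : ℕ) : ℝ) ^ (-τ) ≤
        ‖(Complex.exp (2 * π * Complex.I * ((ω.1 : ℂ) * k.1 + (ω.2 : ℂ) * k.2))
            - (1 + (l : ℂ))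
            + (l : ℂ) * Complex.exp (-(2 * π * Complex.I * ((ω.1 : ℂ) * k.1 + (ω.2 : ℂ) * k.2))))‖ :=
  small_divisor_lower_bound_general ω ν τ l hl0 hl1 hdio
end

section
/- Existence part of the cohomology lemma (Lemma 6.1): let ω ∈ ℝ² satisfy the Diophantine condition with constants ν ∈ (0,1] and τ ≥ 1, let λ ∈ ℝ with 0 < λ < 1, and let (η̂_k)_{k∈ℤ²} be complex coefficients such that |η̂_k| ≤ C e^{−δ(|k₁|+|k₂|)} for some constants C, δ > 0. Set μ = −η̂₀, ĝ₀ = 0, and ĝ_k = η̂_k / d_k for k ≠ 0, where d_k = e^{2πi ω·k} − (1+λ) + λ e^{−2πi ω·k}. Then the family (ĝ_k)_{k∈ℤ²} is absolutely summable, and, defining g(ψ) = Σ_{k∈ℤ²} ĝ_k e^{i k·ψ} and η(ψ) = Σ_{k∈ℤ²} η̂_k e^{i k·ψ}, for every ψ ∈ ℝ² one has g(ψ + 2πω) − (1+λ) g(ψ) + λ g(ψ − 2πω) − μ = η(ψ). -/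
/-!
Every Fourier mode `e^{ik·ψ}` is an eigenfunction of `L_{λ,ω}` with eigenvalue `d_k`, so the
choice `ĝ_k = η̂_k / d_k` solves the equation mode by mode, the mode `k = 0` being absorbed by `μ`.
With `θ = e^{2πi ω·k}` one has `d_k = (θ - 1)(1 - λ θ⁻¹)`, hence by Jordan's inequality and the
Diophantine condition `|d_k| ≥ 4 (1 - λ) dist(ω·k, ℤ) ≥ 4 (1 - λ) ν |k|^{-τ}`. The polynomial loss
`|k|^τ` is absorbed by half of the exponential decay of `η̂`, so `ĝ` is absolutely summable, which
justifies the termwise computation.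
-/

open Complex Real

theorem four_mul_abs_sub_round_le_norm_cexp_sub_one (x : ℝ) :
    4 * |x - round x| ≤ ‖cexp (2 * π * I * x) - 1‖ := by
  set y := x - round x with hy
  have hper : cexp (2 * π * I * x) = cexp (I * ↑(2 * π * y)) := by
    rw [show (2 * π * I * x : ℂ) = I * ↑(2 * π * y) + (round x : ℤ) * (2 * π * I) by
      push_cast [hy]; ring, Complex.exp_add, exp_int_mul_two_pi_mul_I, mul_one]
  have hjordan : 2 / π * |π * y| ≤ |Real.sin (π * y)| := by
    refine Real.mul_abs_le_abs_sin ?_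
    rw [abs_mul, abs_of_pos pi_pos]
    nlinarith [abs_sub_round x, pi_pos]
  rw [hper, norm_exp_I_mul_ofReal_sub_one, norm_mul, Real.norm_eq_abs, Real.norm_eq_abs,
    abs_two, show 2 * π * y / 2 = π * y by ring]
  rw [abs_mul, abs_of_pos pi_pos, ← mul_assoc, div_mul_cancel₀ _ pi_pos.ne'] at hjordan
  linarith

/-- The small divisor `d_k` of the paper is `smallDivisor λ (ω · k)`. -/
noncomputable def smallDivisor (l x : ℝ) : ℂ :=
  cexp (2 * π * I * x) - (1 + l) + l * cexp (-(2 * π * I * x))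

theorem mul_le_norm_smallDivisor {l x c : ℝ} (hl : |l| ≤ 1) (hx : ∀ m : ℤ, c ≤ |x + m|) :
    4 * (1 - |l|) * c ≤ ‖smallDivisor l x‖ := by
  have hθ : ‖cexp (2 * π * I * x)‖ = 1 := by
    rw [show (2 * π * I * x : ℂ) = ↑(2 * π * x) * I by push_cast; ring, norm_exp_ofReal_mul_I]
  have hfactor : smallDivisor l x =
      (cexp (2 * π * I * x) - 1) * (1 - l * (cexp (2 * π * I * x))⁻¹) := by
    rw [smallDivisor, Complex.exp_neg]
    field_simp
    ring
  have hfirst : 4 * c ≤ ‖cexp (2 * π * I * x) - 1‖ := by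
    have := hx (-round x)
    rw [Int.cast_neg, ← sub_eq_add_neg] at this
    linarith [four_mul_abs_sub_round_le_norm_cexp_sub_one x]
  have hsecond : 1 - |l| ≤ ‖1 - l * (cexp (2 * π * I * x))⁻¹‖ := by
    simpa [hθ] using norm_sub_norm_le (1 : ℂ) (l * (cexp (2 * π * I * x))⁻¹)
  calc 4 * (1 - |l|) * c = 4 * c * (1 - |l|) := by ring
    _ ≤ ‖smallDivisor l x‖ := by
      rw [hfactor, norm_mul]
      exact mul_le_mul hfirst hsecond (sub_nonneg.2 hl) (norm_nonneg _)

theorem rpow_le_mul_exp {τ ε s : ℝ} (hτ : 0 < τ) (hε : 0 < ε) (hs : 0 ≤ s) :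
    s ^ τ ≤ (τ / ε) ^ τ * Real.exp (ε * s) := by
  have hlin : s ≤ τ / ε * Real.exp (ε * s / τ) := by
    calc s = τ / ε * (ε * s / τ) := by field_simp
      _ ≤ τ / ε * Real.exp (ε * s / τ) := by
        gcongr
        linarith [Real.add_one_le_exp (ε * s / τ)]
  calc s ^ τ ≤ (τ / ε * Real.exp (ε * s / τ)) ^ τ := by gcongr
    _ = (τ / ε) ^ τ * Real.exp (ε * s) := by
      rw [Real.mul_rpow (by positivity) (Real.exp_pos _).le, ← Real.exp_mul,
        div_mul_cancel₀ _ hτ.ne']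

theorem summable_exp_neg_mul_natAbs {c : ℝ} (hc : 0 < c) :
    Summable fun n : ℤ => Real.exp (-c * n.natAbs) := by
  have hnat : Summable fun n : ℕ => Real.exp (-c * n) :=
    (Real.summable_exp_nat_mul_iff.2 (neg_lt_zero.2 hc)).congr fun n => by rw [mul_comm]
  exact .of_nat_of_neg (hnat.congr fun n => by simp) (hnat.congr fun n => by simp)

theorem summable_exp_neg_mul_natAbs_add {c : ℝ} (hc : 0 < c) :
    Summable fun k : ℤ × ℤ => Real.exp (-c * (k.1.natAbs + k.2.natAbs)) := by
  have h := summable_exp_neg_mul_natAbs hc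
  refine (h.mul_of_nonneg h (fun _ => (Real.exp_pos _).le) fun _ => (Real.exp_pos _).le).congr
    fun k => ?_
  rw [← Real.exp_add, mul_add]

theorem summable_rpow_mul_exp_neg_mul_natAbs_add {τ δ : ℝ} (hτ : 0 < τ) (hδ : 0 < δ) :
    Summable fun k : ℤ × ℤ =>
      (k.1.natAbs + k.2.natAbs : ℝ) ^ τ * Real.exp (-δ * (k.1.natAbs + k.2.natAbs)) := by
  refine ((summable_exp_neg_mul_natAbs_add (half_pos hδ)).mul_left ((τ / (δ / 2)) ^ τ))
    |>.of_nonneg_of_le (fun _ => by positivity) fun k => ?_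
  set s : ℝ := k.1.natAbs + k.2.natAbs
  calc s ^ τ * Real.exp (-δ * s)
      ≤ (τ / (δ / 2)) ^ τ * Real.exp (δ / 2 * s) * Real.exp (-δ * s) := by
        gcongr
        exact rpow_le_mul_exp hτ (half_pos hδ) (by positivity)
    _ = (τ / (δ / 2)) ^ τ * Real.exp (-(δ / 2) * s) := by
        rw [mul_assoc, ← Real.exp_add]
        ring_nf

theorem max_natAbs_pos {k : ℤ × ℤ} (hk : k ≠ 0) : 0 < max k.1.natAbs k.2.natAbs := by
  rcases k with ⟨a, b⟩
  simp only [ne_eq, Prod.ext_iff, Prod.fst_zero, Prod.snd_zero, not_and_or] at hk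
  omega

theorem summable_norm_ite_div {η d : ℤ × ℤ → ℂ} {C δ c τ : ℝ} (hδ : 0 < δ) (hc : 0 < c)
    (hτ : 0 < τ) (hη : ∀ k, ‖η k‖ ≤ C * Real.exp (-δ * (k.1.natAbs + k.2.natAbs)))
    (hd : ∀ k ≠ 0, c * ((max k.1.natAbs k.2.natAbs : ℕ) : ℝ) ^ (-τ) ≤ ‖d k‖) :
    Summable fun k => ‖if k = 0 then 0 else η k / d k‖ := by
  refine ((summable_rpow_mul_exp_neg_mul_natAbs_add hτ hδ).mul_left (C / c)).of_nonneg_of_le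
    (fun _ => norm_nonneg _) fun k => ?_
  have hC : 0 ≤ C * Real.exp (-δ * (k.1.natAbs + k.2.natAbs)) := (norm_nonneg _).trans (hη k)
  have hC0 : 0 ≤ C := (mul_nonneg_iff_of_pos_right (Real.exp_pos _)).1 hC
  split_ifs with hk
  · rw [norm_zero]
    exact mul_nonneg (div_nonneg hC0 hc.le) (by positivity)
  set N : ℝ := ((max k.1.natAbs k.2.natAbs : ℕ) : ℝ)
  have hNS : N ≤ k.1.natAbs + k.2.natAbs := by
    simp only [N]
    exact_mod_cast max_le_add_of_nonneg (Nat.zero_le _) (Nat.zero_le _)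
  have hN : 0 < N := Nat.cast_pos.2 (max_natAbs_pos hk)
  have hdpos : 0 < c * N ^ (-τ) := by positivity
  calc ‖η k / d k‖ ≤ C * Real.exp (-δ * (k.1.natAbs + k.2.natAbs)) / (c * N ^ (-τ)) := by
        rw [norm_div]
        exact div_le_div₀ hC (hη k) hdpos (hd k hk)
    _ = C / c * (N ^ τ * Real.exp (-δ * (k.1.natAbs + k.2.natAbs))) := by
        rw [Real.rpow_neg hN.le]
        field_simp
    _ ≤ _ := by gcongr

noncomputable def torusChar (k : ℤ × ℤ) (ψ : ℝ × ℝ) : ℂ :=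
  cexp (I * ((k.1 : ℂ) * ψ.1 + (k.2 : ℂ) * ψ.2))

noncomputable def fourierSum (a : ℤ × ℤ → ℂ) (ψ : ℝ × ℝ) : ℂ :=
  ∑' k, a k * torusChar k ψ

theorem norm_torusChar (k : ℤ × ℤ) (ψ : ℝ × ℝ) : ‖torusChar k ψ‖ = 1 := by
  rw [torusChar, show I * ((k.1 : ℂ) * ψ.1 + (k.2 : ℂ) * ψ.2) = ↑(k.1 * ψ.1 + k.2 * ψ.2) * I by
    push_cast; ring, norm_exp_ofReal_mul_I]

theorem summable_mul_torusChar {a : ℤ × ℤ → ℂ} (ha : Summable fun k => ‖a k‖) (ψ : ℝ × ℝ) :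
    Summable fun k => a k * torusChar k ψ :=
  .of_norm <| ha.congr fun k => by rw [norm_mul, norm_torusChar, mul_one]

theorem fourierSum_ite_zero {a : ℤ × ℤ → ℂ} (ha : Summable fun k => ‖a k‖) (ψ : ℝ × ℝ) :
    fourierSum (fun k => if k = 0 then 0 else a k) ψ = fourierSum a ψ - a 0 := by
  rw [fourierSum, fourierSum, (summable_mul_torusChar ha ψ).tsum_eq_add_tsum_ite 0]
  simp [torusChar]

theorem fourierSum_cohomology {a : ℤ × ℤ → ℂ} (ha : Summable fun k => ‖a k‖) (l : ℝ)
    (ω ψ : ℝ × ℝ) :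
    fourierSum a (ψ.1 + 2 * π * ω.1, ψ.2 + 2 * π * ω.2) - (1 + l) * fourierSum a ψ
      + l * fourierSum a (ψ.1 - 2 * π * ω.1, ψ.2 - 2 * π * ω.2) =
    fourierSum (fun k => smallDivisor l (k.1 * ω.1 + k.2 * ω.2) * a k) ψ := by
  have hplus : ∀ k : ℤ × ℤ, torusChar k (ψ.1 + 2 * π * ω.1, ψ.2 + 2 * π * ω.2) =
      cexp (2 * π * I * ↑(k.1 * ω.1 + k.2 * ω.2)) * torusChar k ψ := fun k => by
    rw [torusChar, torusChar, ← Complex.exp_add]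
    push_cast
    ring_nf
  have hminus : ∀ k : ℤ × ℤ, torusChar k (ψ.1 - 2 * π * ω.1, ψ.2 - 2 * π * ω.2) =
      cexp (-(2 * π * I * ↑(k.1 * ω.1 + k.2 * ω.2))) * torusChar k ψ := fun k => by
    rw [torusChar, torusChar, ← Complex.exp_add]
    push_cast
    ring_nf
  have hsum := summable_mul_torusChar ha
  rw [fourierSum, fourierSum, fourierSum, fourierSum, ← tsum_mul_left, ← tsum_mul_left,
    ← (hsum _).tsum_sub ((hsum ψ).mul_left _), ← ((hsum _).sub ((hsum ψ).mul_left _)).tsum_add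
      ((hsum _).mul_left _)]
  congr 1
  funext k
  rw [hplus, hminus, smallDivisor]
  ring

theorem cohomology_equation_existence_general (ω : ℝ × ℝ) (ν τ l : ℝ)
    (hν : 0 < ν) (hτ : 1 ≤ τ) (hl0 : 0 < l) (hl1 : l < 1)
    (hdio : ∀ m₁ : ℤ × ℤ, m₁ ≠ 0 → ∀ m₂ : ℤ,
      ν * ((max m₁.1.natAbs m₁.2.natAbs : ℕ) : ℝ) ^ (-τ) ≤
        |(m₁.1 : ℝ) * ω.1 + (m₁.2 : ℝ) * ω.2 + m₂|)
    (η : ℤ × ℤ → ℂ) (C δ : ℝ) (hδ : 0 < δ)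
    (hdecay : ∀ k : ℤ × ℤ, ‖η k‖ ≤ C * Real.exp (-δ * (k.1.natAbs + k.2.natAbs))) :
    let d : ℤ × ℤ → ℂ := fun k =>
      Complex.exp (2 * π * Complex.I * ((ω.1 : ℂ) * k.1 + (ω.2 : ℂ) * k.2))
        - (1 + (l : ℂ))
        + (l : ℂ) * Complex.exp (-(2 * π * Complex.I * ((ω.1 : ℂ) * k.1 + (ω.2 : ℂ) * k.2)))
    let ghat : ℤ × ℤ → ℂ := fun k => if k = 0 then 0 else η k / d k
    let μ : ℂ := -η 0
    let g : ℝ × ℝ → ℂ := fun ψ =>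
      ∑' k : ℤ × ℤ, ghat k * Complex.exp (Complex.I * ((k.1 : ℂ) * ψ.1 + (k.2 : ℂ) * ψ.2))
    let e : ℝ × ℝ → ℂ := fun ψ =>
      ∑' k : ℤ × ℤ, η k * Complex.exp (Complex.I * ((k.1 : ℂ) * ψ.1 + (k.2 : ℂ) * ψ.2))
    Summable (fun k : ℤ × ℤ => ‖ghat k‖) ∧
    ∀ ψ : ℝ × ℝ,
      g (ψ.1 + 2 * π * ω.1, ψ.2 + 2 * π * ω.2) - (1 + (l : ℂ)) * g ψ
        + (l : ℂ) * g (ψ.1 - 2 * π * ω.1, ψ.2 - 2 * π * ω.2) - μ = e ψ := by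
  intro d ghat μ g e
  have hd : ∀ k : ℤ × ℤ, d k = smallDivisor l (k.1 * ω.1 + k.2 * ω.2) := fun k => by
    simp only [d, smallDivisor]
    push_cast
    ring_nf
  have hd_lower : ∀ k ≠ 0,
      4 * (1 - l) * ν * ((max k.1.natAbs k.2.natAbs : ℕ) : ℝ) ^ (-τ) ≤ ‖d k‖ := by
    intro k hk
    have h := mul_le_norm_smallDivisor (abs_of_pos hl0 ▸ hl1.le) (hdio k hk)
    rwa [abs_of_pos hl0, ← mul_assoc, ← hd] at h
  have hc : 0 < 4 * (1 - l) * ν := by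
    have := sub_pos.2 hl1
    positivity
  have hd_ne : ∀ k ≠ 0, d k ≠ 0 := fun k hk => by
    have hN := Real.rpow_pos_of_pos (Nat.cast_pos.2 (max_natAbs_pos hk)) (-τ)
    exact norm_pos_iff.1 ((mul_pos hc hN).trans_le (hd_lower k hk))
  have hghat : Summable fun k => ‖ghat k‖ :=
    summable_norm_ite_div hδ hc (by linarith) hdecay hd_lower
  have hη : Summable fun k => ‖η k‖ := ((summable_exp_neg_mul_natAbs_add hδ).mul_left C)
    |>.of_nonneg_of_le (fun _ => norm_nonneg _) hdecay
  have hsymbol : (fun k : ℤ × ℤ => smallDivisor l (k.1 * ω.1 + k.2 * ω.2) * ghat k) =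
      fun k => if k = 0 then 0 else η k := by
    funext k
    by_cases hk : k = 0
    · simp [ghat, hk]
    · simp only [ghat, if_neg hk, ← hd]
      field_simp [hd_ne k hk]
  refine ⟨hghat, fun ψ => ?_⟩
  have hg : g = fourierSum ghat := rfl
  have he : e = fourierSum η := rfl
  rw [hg, he, sub_eq_iff_eq_add, fourierSum_cohomology hghat l ω ψ, hsymbol,
    fourierSum_ite_zero hη]
  ring

/-- Existence part of the cohomology lemma: the Fourier coefficients obtained by
dividing by the small divisors are absolutely summable and the resulting function
solves the cohomology equation. -/
theorem cohomology_equation_existence (ω : ℝ × ℝ) (ν τ l : ℝ)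
    (hν : 0 < ν) (hν1 : ν ≤ 1) (hτ : 1 ≤ τ) (hl0 : 0 < l) (hl1 : l < 1)
    (hdio : ∀ m₁ : ℤ × ℤ, m₁ ≠ 0 → ∀ m₂ : ℤ,
      ν * ((max m₁.1.natAbs m₁.2.natAbs : ℕ) : ℝ) ^ (-τ) ≤
        |(m₁.1 : ℝ) * ω.1 + (m₁.2 : ℝ) * ω.2 + m₂|)
    (η : ℤ × ℤ → ℂ) (C δ : ℝ) (hC : 0 < C) (hδ : 0 < δ)
    (hdecay : ∀ k : ℤ × ℤ, ‖η k‖ ≤ C * Real.exp (-δ * (k.1.natAbs + k.2.natAbs))) :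
    let d : ℤ × ℤ → ℂ := fun k =>
      Complex.exp (2 * π * Complex.I * ((ω.1 : ℂ) * k.1 + (ω.2 : ℂ) * k.2))
        - (1 + (l : ℂ))
        + (l : ℂ) * Complex.exp (-(2 * π * Complex.I * ((ω.1 : ℂ) * k.1 + (ω.2 : ℂ) * k.2)))
    let ghat : ℤ × ℤ → ℂ := fun k => if k = 0 then 0 else η k / d k
    let μ : ℂ := -η 0
    let g : ℝ × ℝ → ℂ := fun ψ =>
      ∑' k : ℤ × ℤ, ghat k * Complex.exp (Complex.I * ((k.1 : ℂ) * ψ.1 + (k.2 : ℂ) * ψ.2))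
    let e : ℝ × ℝ → ℂ := fun ψ =>
      ∑' k : ℤ × ℤ, η k * Complex.exp (Complex.I * ((k.1 : ℂ) * ψ.1 + (k.2 : ℂ) * ψ.2))
    Summable (fun k : ℤ × ℤ => ‖ghat k‖) ∧
    ∀ ψ : ℝ × ℝ,
      g (ψ.1 + 2 * π * ω.1, ψ.2 + 2 * π * ω.2) - (1 + (l : ℂ)) * g ψ
        + (l : ℂ) * g (ψ.1 - 2 * π * ω.1, ψ.2 - 2 * π * ω.2) - μ = e ψ :=
  cohomology_equation_existence_general ω ν τ l hν hτ hl0 hl1 hdio η C δ hδ hdecay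
end

section
/- Rigidity for the homogeneous cohomology equation with dissipation: let 0 < λ < 1, ω ∈ ℝ², and let h : ℝ² → ℂ be continuous and 2π-periodic in each variable. If h(ψ + 2πω) − (1+λ) h(ψ) + λ h(ψ − 2πω) = 0 for all ψ ∈ ℝ², then h(ψ + 2πω) = h(ψ) for all ψ ∈ ℝ². -/
/-!
The difference `g ψ = h (ψ + v) - h ψ`, `v = 2πω`, satisfies `g ψ = λ g (ψ - v)`, hence
`‖g ψ‖ ≤ λⁿ sup ‖g‖` for every `n`. Being continuous and doubly periodic, `h` is bounded, so
`sup ‖g‖ < ∞` and `g = 0`.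
-/

open Complex Real

open Set Function in
theorem isCompact_range_of_biperiodic {α : Type*} [TopologicalSpace α] {f : ℝ × ℝ → α}
    {a b : ℝ} (ha : a ≠ 0) (hb : b ≠ 0) (hf : Continuous f)
    (h₁ : ∀ x y, f (x + a, y) = f (x, y)) (h₂ : ∀ x y, f (x, y + b) = f (x, y)) :
    IsCompact (range f) := by
  suffices range f = f '' uIcc 0 a ×ˢ uIcc 0 b from
    this ▸ (isCompact_uIcc.prod isCompact_uIcc).image hf
  refine (image_subset_range _ _).antisymm' ?_
  rintro _ ⟨⟨x, y⟩, rfl⟩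
  have hx := Periodic.image_uIcc (f := fun t => f (t, y)) (h₁ · y) ha 0
  have hy (x') := Periodic.image_uIcc (f := fun t => f (x', t)) (h₂ x') hb 0
  rw [zero_add] at hx hy
  obtain ⟨x', hx', hxx'⟩ := hx ▸ mem_range_self x
  obtain ⟨y', hy', hyy'⟩ := hy x' ▸ mem_range_self y
  exact ⟨(x', y'), ⟨hx', hy'⟩, hyy'.trans hxx'⟩

open Filter in
theorem norm_eq_zero_of_norm_le_mul_norm_comp {X E : Type*} [SeminormedAddCommGroup E]
    {g : X → E} {τ : X → X} {r M : ℝ} (hr₀ : 0 ≤ r) (hr₁ : r < 1)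
    (hbdd : ∀ x, ‖g x‖ ≤ M) (hg : ∀ x, ‖g x‖ ≤ r * ‖g (τ x)‖) (x : X) : ‖g x‖ = 0 := by
  have hpow (n : ℕ) : ∀ x, ‖g x‖ ≤ r ^ n * M := by
    induction n with
    | zero => simpa using hbdd
    | succ n ih =>
      intro x
      calc ‖g x‖ ≤ r * ‖g (τ x)‖ := hg x
        _ ≤ r * (r ^ n * M) := mul_le_mul_of_nonneg_left (ih _) hr₀
        _ = r ^ (n + 1) * M := by ring
  have hlim : Tendsto (fun n : ℕ => r ^ n * M) atTop (nhds 0) := by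
    simpa using (tendsto_pow_atTop_nhds_zero_of_lt_one hr₀ hr₁).mul_const M
  exact (ge_of_tendsto' hlim (hpow · x)).antisymm (norm_nonneg _)

theorem add_eq_of_dissipative_cohomology_eq_zero {G 𝕜 E : Type*} [AddGroup G]
    [NormedField 𝕜] [NormedAddCommGroup E] [NormedSpace 𝕜 E] {h : G → E} {v : G} {c : 𝕜}
    (hc : ‖c‖ < 1) (hbdd : Bornology.IsBounded (Set.range h))
    (heq : ∀ x, h (x + v) - (1 + c) • h x + c • h (x - v) = 0) (x : G) :
    h (x + v) = h x := by
  obtain ⟨M, hM⟩ := isBounded_iff_forall_norm_le.mp hbdd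
  set g : G → E := fun x => h (x + v) - h x
  have hshift (x : G) : g x = c • g (x - v) := by
    simp only [g, sub_add_cancel, smul_sub]
    linear_combination (norm := module) heq x
  have hg (x : G) : ‖g x‖ ≤ ‖c‖ * ‖g (x - v)‖ := by
    rw [hshift, norm_smul]
  have hgbdd (x : G) : ‖g x‖ ≤ M + M :=
    (norm_sub_le _ _).trans (add_le_add (hM _ ⟨_, rfl⟩) (hM _ ⟨_, rfl⟩))
  exact sub_eq_zero.mp <| norm_eq_zero.mp <|
    norm_eq_zero_of_norm_le_mul_norm_comp (g := g) (norm_nonneg c) hc hgbdd hg x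

/-- Rigidity for the homogeneous cohomology equation with dissipation. -/
theorem homogeneous_cohomology_rigidity (l : ℝ) (hl0 : 0 < l) (hl1 : l < 1)
    (ω : ℝ × ℝ) (h : ℝ × ℝ → ℂ)
    (hc : Continuous h)
    (hper1 : ∀ ψ : ℝ × ℝ, h (ψ.1 + 2 * π, ψ.2) = h ψ)
    (hper2 : ∀ ψ : ℝ × ℝ, h (ψ.1, ψ.2 + 2 * π) = h ψ)
    (heq : ∀ ψ : ℝ × ℝ,
      h (ψ.1 + 2 * π * ω.1, ψ.2 + 2 * π * ω.2) - (1 + (l : ℂ)) * h ψ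
        + (l : ℂ) * h (ψ.1 - 2 * π * ω.1, ψ.2 - 2 * π * ω.2) = 0) :
    ∀ ψ : ℝ × ℝ, h (ψ.1 + 2 * π * ω.1, ψ.2 + 2 * π * ω.2) = h ψ := by
  have hπ : 2 * π ≠ 0 := by positivity
  have hbdd : Bornology.IsBounded (Set.range h) :=
    (isCompact_range_of_biperiodic hπ hπ hc (fun x y => hper1 (x, y))
      (fun x y => hper2 (x, y))).isBounded
  have hl : ‖(l : ℂ)‖ < 1 := by rwa [Complex.norm_real, Real.norm_of_nonneg hl0.le]
  exact add_eq_of_dissipative_cohomology_eq_zero (v := (2 * π * ω.1, 2 * π * ω.2)) hl hbdd heq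
end

section
/- Uniqueness part of the cohomology lemma (Lemma 6.1): let 0 < λ < 1 and let ω ∈ ℝ² be nonresonant, i.e. k·ω + m ≠ 0 for every k ∈ ℤ² \ {0} and m ∈ ℤ. Let η : ℝ² → ℂ be continuous and 2π-periodic in each variable. Suppose g₁, g₂ : ℝ² → ℂ are continuous, 2π-periodic in each variable, have zero average over [0,2π]², and μ₁, μ₂ ∈ ℂ are such that gᵢ(ψ + 2πω) − (1+λ) gᵢ(ψ) + λ gᵢ(ψ − 2πω) − μᵢ = η(ψ) for all ψ ∈ ℝ² and i = 1,2. Then μ₁ = μ₂ and g₁ = g₂. -/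
open Complex Real MeasureTheory

-- exp of nonresonant phase ≠ 1
lemma exp_ne_one_aux {c : ℝ} (hc : ∀ m : ℤ, c + (m:ℝ) ≠ 0) :
    Complex.exp (2 * π * Complex.I * c) ≠ 1 := by
  intro h
  rw [Complex.exp_eq_one_iff] at h
  obtain ⟨m, hm⟩ := h
  have hne : (2 * (π:ℂ) * Complex.I) ≠ 0 := by
    simp [Real.pi_ne_zero, Complex.I_ne_zero]
  have hcm : (c : ℂ) = (m : ℂ) := by
    apply mul_left_cancel₀ hne
    rw [hm]; ring
  have : c = (m : ℝ) := by exact_mod_cast hcm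
  exact hc (-m) (by push_cast; linarith)

lemma exists_Ico_rep {c : ℝ} (hc : 0 < c) (x : ℝ) :
    ∃ y ∈ Set.Ico (0:ℝ) c, ∃ n : ℤ, x = y + n * c :=
  ⟨x - ⌊x/c⌋ * c, ⟨Int.sub_floor_div_mul_nonneg x hc, Int.sub_floor_div_mul_lt x hc⟩,
    ⌊x/c⌋, by ring⟩

lemma geom_decay (l : ℝ) (hl0 : 0 < l) (hl1 : l < 1) (G : ℝ → ℝ → ℂ) (c : ℂ) (a b : ℝ)
    (hstep : ∀ x y, G x y - c = (l:ℂ) * (G (x - a) (y - b) - c))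
    (hbd : ∃ M, ∀ x y, ‖G x y - c‖ ≤ M) : ∀ x y, G x y = c := by
  obtain ⟨M, hM⟩ := hbd
  intro x y
  have key : ∀ n : ℕ, G x y - c = (l:ℂ)^n * (G (x - n*a) (y - n*b) - c) := by
    intro n
    induction n with
    | zero => simp
    | succ n ih =>
      rw [ih, hstep (x - n*a) (y - n*b)]
      have e1 : x - (n:ℝ)*a - a = x - ((n:ℕ)+1:ℝ)*a := by push_cast; ring
      have e2 : y - (n:ℝ)*b - b = y - ((n:ℕ)+1:ℝ)*b := by push_cast; ring
      rw [e1, e2]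
      push_cast
      ring
  have hle : ∀ n : ℕ, ‖G x y - c‖ ≤ l^n * M := by
    intro n
    rw [key n, norm_mul]
    have : ‖((l:ℂ))^n‖ = l^n := by
      rw [norm_pow]
      simp [Complex.norm_real, abs_of_pos hl0]
    rw [this]
    exact mul_le_mul_of_nonneg_left (hM _ _) (pow_nonneg hl0.le n)
  have h0 : Filter.Tendsto (fun n : ℕ => l^n * M) Filter.atTop (nhds 0) := by
    simpa using (tendsto_pow_atTop_nhds_zero_of_lt_one hl0.le hl1).mul_const M
  have hnn : ‖G x y - c‖ ≤ 0 := ge_of_tendsto' h0 hle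
  have h1 : ‖G x y - c‖ = 0 := le_antisymm hnn (norm_nonneg _)
  simpa [sub_eq_zero] using h1

-- 1D Fourier uniqueness
lemma periodic_zero_of_fourier (f : ℝ → ℂ) (hf : Continuous f)
    (hper : Function.Periodic f (2 * π))
    (hcoeff : ∀ n : ℤ,
      (∫ x in (0:ℝ)..(2 * π), Complex.exp (-((n:ℂ) * (x:ℝ)) * Complex.I) * f x) = 0) :
    ∀ x, f x = 0 := by
  haveI : Fact (0 < 2 * π) := ⟨by positivity⟩
  set F : AddCircle (2 * π) → ℂ := AddCircle.liftIco (2 * π) 0 f with hF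
  have hFc : Continuous F :=
    AddCircle.liftIco_zero_continuous (by simpa using (hper.eq).symm) hf.continuousOn
  have hF0 : ∀ n : ℤ, fourierCoeff F n = 0 := by
    intro n
    rw [hF, fourierCoeff_liftIco_eq, fourierCoeffOn_eq_integral]
    have : (∫ x in (0:ℝ)..(0 + 2*π),
        fourier (-n) (x : AddCircle (0 + 2*π - 0)) • f x) = 0 := by
      rw [← hcoeff n]
      simp only [zero_add, sub_zero]
      refine intervalIntegral.integral_congr fun x hx => ?_
      rw [fourier_coe_apply, smul_eq_mul]
      have hpi : (π:ℂ) ≠ 0 := by exact_mod_cast Real.pi_ne_zero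
      congr 2
      push_cast
      field_simp
      ring
    rw [this, smul_zero]
  have hFzero : F = 0 := by
    have h2 : (ContinuousMap.toLp (E := ℂ) 2 AddCircle.haarAddCircle ℂ
        (⟨F, hFc⟩ : C(AddCircle (2*π), ℂ))) = 0 := by
      apply fourierBasis.repr.injective
      ext i
      rw [fourierBasis_repr, fourierCoeff_toLp]
      simp [hF0 i]
    have h3 : (⟨F, hFc⟩ : C(AddCircle (2*π), ℂ)) = (0 : C(AddCircle (2*π), ℂ)) :=
      ContinuousMap.toLp_injective (p := 2) (𝕜 := ℂ) AddCircle.haarAddCircle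
        (by rw [h2, map_zero])
    funext z
    simpa using DFunLike.congr_fun h3 z
  intro x
  obtain ⟨y, hy, n, rfl⟩ := exists_Ico_rep (by positivity : (0:ℝ) < 2*π) x
  rw [(hper.int_mul n) y]
  have : F (y : AddCircle (2*π)) = f y := AddCircle.liftIco_zero_coe_apply hy
  rw [← this, hFzero]; rfl

lemma cohomology_aux (l : ℝ) (hl0 : 0 < l) (hl1 : l < 1) (ω1 ω2 : ℝ)
    (hnr : ∀ n k : ℤ, ¬(n = 0 ∧ k = 0) → ∀ m : ℤ, (n:ℝ) * ω1 + (k:ℝ) * ω2 + m ≠ 0)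
    (d : ℝ → ℝ → ℂ) (μ : ℂ)
    (hd : Continuous fun p : ℝ × ℝ => d p.1 p.2)
    (per1 : ∀ y, Function.Periodic (fun x => d x y) (2*π))
    (per2 : ∀ x, Function.Periodic (d x) (2*π))
    (havg : ∫ ψ in (Set.Icc (0:ℝ) (2*π)) ×ˢ (Set.Icc (0:ℝ) (2*π)), d ψ.1 ψ.2 = 0)
    (heq : ∀ x y, d (x + 2*π*ω1) (y + 2*π*ω2) - (1+(l:ℂ)) * d x y
      + (l:ℂ) * d (x - 2*π*ω1) (y - 2*π*ω2) = μ) :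
    μ = 0 ∧ ∀ x y, d x y = 0 := by
  have hπ : (0:ℝ) < 2*π := by positivity
  -- boundedness
  obtain ⟨M, hM⟩ : ∃ M : ℝ, ∀ x y : ℝ, ‖d x y‖ ≤ M := by
    obtain ⟨C, hC⟩ := (isCompact_Icc.prod isCompact_Icc).exists_bound_of_continuousOn
      hd.continuousOn
    refine ⟨C, fun x y => ?_⟩
    obtain ⟨x', hx', n, rfl⟩ := exists_Ico_rep hπ x
    obtain ⟨y', hy', m, rfl⟩ := exists_Ico_rep hπ y
    have e1 : d (x' + n * (2*π)) (y' + m * (2*π)) = d x' y' :=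
      ((per1 (y' + m * (2*π))).int_mul n x').trans ((per2 x').int_mul m y')
    rw [e1]
    exact hC (x', y') ⟨Set.Ico_subset_Icc_self hx', Set.Ico_subset_Icc_self hy'⟩
  -- step equation for the difference G
  have hlne : (1:ℂ) - (l:ℂ) ≠ 0 := by
    have : ((1 - l : ℝ) : ℂ) ≠ 0 := by
      rw [Complex.ofReal_ne_zero]; linarith
    simpa using this
  obtain ⟨c, hc⟩ : ∃ c : ℂ, (1 - (l:ℂ)) * c = μ :=
    ⟨μ / (1 - (l:ℂ)), by field_simp⟩
  have hGc : ∀ x y : ℝ, d (x + 2*π*ω1) (y + 2*π*ω2) - d x y = c := by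
    apply geom_decay l hl0 hl1 (fun x y => d (x + 2*π*ω1) (y + 2*π*ω2) - d x y) c
      (2*π*ω1) (2*π*ω2)
    · intro x y
      simp only [sub_add_cancel]
      linear_combination (heq x y) - hc
    · exact ⟨2*M + ‖c‖, fun x y => by
        calc ‖d (x + 2*π*ω1) (y + 2*π*ω2) - d x y - c‖
            ≤ ‖d (x + 2*π*ω1) (y + 2*π*ω2) - d x y‖ + ‖c‖ := norm_sub_le _ _
          _ ≤ (‖d (x + 2*π*ω1) (y + 2*π*ω2)‖ + ‖d x y‖) + ‖c‖ := by
              gcongr; exact norm_sub_le _ _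
          _ ≤ 2*M + ‖c‖ := by have := hM (x + 2*π*ω1) (y + 2*π*ω2); have := hM x y; linarith⟩
  -- c = 0
  have hc0 : c = 0 := by
    by_contra hc0
    have hiter : ∀ n : ℕ, d ((n:ℝ)*(2*π*ω1)) ((n:ℝ)*(2*π*ω2)) = d 0 0 + (n:ℂ) * c := by
      intro n
      induction n with
      | zero => simp
      | succ n ih =>
        have := hGc ((n:ℝ)*(2*π*ω1)) ((n:ℝ)*(2*π*ω2))
        have e1 : (n:ℝ)*(2*π*ω1) + 2*π*ω1 = ((n:ℕ)+1:ℝ)*(2*π*ω1) := by push_cast; ring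
        have e2 : (n:ℝ)*(2*π*ω2) + 2*π*ω2 = ((n:ℕ)+1:ℝ)*(2*π*ω2) := by push_cast; ring
        rw [e1, e2] at this
        push_cast
        linear_combination this + ih
    have hbound : ∀ n : ℕ, (n:ℝ) * ‖c‖ ≤ 2*M := by
      intro n
      have h1 := hiter n
      have : (n:ℂ) * c = d ((n:ℝ)*(2*π*ω1)) ((n:ℝ)*(2*π*ω2)) - d 0 0 := by
        linear_combination -h1
      calc (n:ℝ) * ‖c‖ = ‖(n:ℂ) * c‖ := by
            rw [norm_mul]; simp
        _ = ‖d ((n:ℝ)*(2*π*ω1)) ((n:ℝ)*(2*π*ω2)) - d 0 0‖ := by rw [this]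
        _ ≤ ‖d ((n:ℝ)*(2*π*ω1)) ((n:ℝ)*(2*π*ω2))‖ + ‖d 0 0‖ := norm_sub_le _ _
        _ ≤ 2*M := by have := hM ((n:ℝ)*(2*π*ω1)) ((n:ℝ)*(2*π*ω2)); have := hM 0 0; linarith
    have hcpos : 0 < ‖c‖ := norm_pos_iff.mpr hc0
    obtain ⟨n, hn⟩ := exists_nat_gt ((2*M) / ‖c‖)
    have := hbound n
    rw [div_lt_iff₀ hcpos] at hn
    linarith
  have hμ : μ = 0 := by rw [← hc, hc0, mul_zero]
  have hinv : ∀ x y : ℝ, d (x + 2*π*ω1) (y + 2*π*ω2) = d x y := by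
    intro x y
    have := hGc x y
    rw [hc0] at this
    exact sub_eq_zero.mp this
  refine ⟨hμ, ?_⟩
  have per1' : ∀ x y : ℝ, d (x + 2*π) y = d x y := fun x y => per1 y x
  have per2' : ∀ x y : ℝ, d x (y + 2*π) = d x y := fun x y => per2 x y
  set F : ℤ → ℝ → ℂ := fun k x =>
    ∫ y in (0:ℝ)..(2*π), Complex.exp (-((k:ℂ) * (y:ℝ)) * Complex.I) * d x y with hFdef
  have hFapp : ∀ k x, F k x = ∫ y in (0:ℝ)..(2*π),
      Complex.exp (-((k:ℂ) * (y:ℝ)) * Complex.I) * d x y := fun k x => rfl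
  have hIcont : ∀ k : ℤ, Continuous (Function.uncurry fun x y =>
      Complex.exp (-((k:ℂ) * (y:ℝ)) * Complex.I) * d x y) := by
    intro k
    apply Continuous.mul
    · apply Complex.continuous_exp.comp
      fun_prop
    · exact hd
  have hFcont : ∀ k, Continuous (F k) := by
    intro k
    exact intervalIntegral.continuous_parametric_intervalIntegral_of_continuous' (hIcont k) _ _
  have hFper : ∀ k, Function.Periodic (F k) (2*π) := by
    intro k x
    rw [hFapp, hFapp]
    refine intervalIntegral.integral_congr fun y hy => ?_
    rw [per1' x y]
  have hFshift : ∀ (k : ℤ) (x : ℝ), F k (x + 2*π*ω1)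
      = Complex.exp (-((k:ℂ) * ((2*π*ω2 : ℝ):ℂ)) * Complex.I) * F k x := by
    intro k x
    have hψper : Function.Periodic
        (fun u : ℝ => Complex.exp (-((k:ℂ) * (((u + 2*π*ω2 : ℝ)):ℂ)) * Complex.I) * d x u)
        (2*π) := by
      intro u
      simp only
      rw [per2' x u]
      congr 1
      rw [show (-((k:ℂ) * (((u + 2*π + 2*π*ω2 : ℝ)):ℂ)) * Complex.I)
          = -((k:ℂ) * (((u + 2*π*ω2 : ℝ)):ℂ)) * Complex.I + ((-k : ℤ):ℂ) * (2*(π:ℂ)*Complex.I)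
        by push_cast; ring]
      rw [Complex.exp_add, Complex.exp_int_mul_two_pi_mul_I, mul_one]
    have step1 : F k (x + 2*π*ω1) = ∫ y in (0:ℝ)..(2*π),
        (fun u : ℝ => Complex.exp (-((k:ℂ) * (((u + 2*π*ω2 : ℝ)):ℂ)) * Complex.I) * d x u)
          (y - 2*π*ω2) := by
      rw [hFapp]
      refine intervalIntegral.integral_congr fun y hy => ?_
      simp only
      have hdv : d (x + 2*π*ω1) y = d x (y - 2*π*ω2) := by
        have h := hinv x (y - 2*π*ω2)
        rw [sub_add_cancel] at h
        exact h
      rw [hdv, sub_add_cancel]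
    rw [step1, intervalIntegral.integral_comp_sub_right
      (fun u : ℝ => Complex.exp (-((k:ℂ) * (((u + 2*π*ω2 : ℝ)):ℂ)) * Complex.I) * d x u)
      (2*π*ω2)]
    have e1 : (0:ℝ) - 2*π*ω2 = 0 - 2*π*ω2 := rfl
    have e2 : (2*π:ℝ) - 2*π*ω2 = (0 - 2*π*ω2) + 2*π := by ring
    rw [e2, hψper.intervalIntegral_add_eq (0 - 2*π*ω2) 0, zero_add]
    rw [hFapp, ← intervalIntegral.integral_const_mul]
    refine intervalIntegral.integral_congr fun u hu => ?_
    beta_reduce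
    rw [← mul_assoc, ← Complex.exp_add]
    congr 2
    push_cast
    ring
  have hCvan : ∀ n k : ℤ, ¬(n = 0 ∧ k = 0) →
      (∫ x in (0:ℝ)..(2*π), Complex.exp (-((n:ℂ) * (x:ℝ)) * Complex.I) * F k x) = 0 := by
    intro n k hnk
    set C := ∫ x in (0:ℝ)..(2*π), Complex.exp (-((n:ℂ) * (x:ℝ)) * Complex.I) * F k x with hCdef
    have way1 : (∫ x in (0:ℝ)..(2*π),
        Complex.exp (-((n:ℂ) * (x:ℝ)) * Complex.I) * F k (x + 2*π*ω1))
        = Complex.exp (-((k:ℂ) * ((2*π*ω2 : ℝ):ℂ)) * Complex.I) * C := by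
      rw [hCdef, ← intervalIntegral.integral_const_mul]
      refine intervalIntegral.integral_congr fun x hx => ?_
      rw [hFshift k x]
      ring
    have hχper : Function.Periodic
        (fun u : ℝ => Complex.exp (-((n:ℂ) * (((u - 2*π*ω1 : ℝ)):ℂ)) * Complex.I) * F k u)
        (2*π) := by
      intro u
      beta_reduce
      rw [hFper k u]
      congr 1
      rw [show (-((n:ℂ) * (((u + 2*π - 2*π*ω1 : ℝ)):ℂ)) * Complex.I)
          = -((n:ℂ) * (((u - 2*π*ω1 : ℝ)):ℂ)) * Complex.I + ((-n : ℤ):ℂ) * (2*(π:ℂ)*Complex.I)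
        by push_cast; ring]
      rw [Complex.exp_add, Complex.exp_int_mul_two_pi_mul_I, mul_one]
    have way2 : (∫ x in (0:ℝ)..(2*π),
        Complex.exp (-((n:ℂ) * (x:ℝ)) * Complex.I) * F k (x + 2*π*ω1))
        = Complex.exp (((n:ℂ) * ((2*π*ω1 : ℝ):ℂ)) * Complex.I) * C := by
      have step1 : (∫ x in (0:ℝ)..(2*π),
          Complex.exp (-((n:ℂ) * (x:ℝ)) * Complex.I) * F k (x + 2*π*ω1))
          = ∫ x in (0:ℝ)..(2*π),
            (fun u : ℝ => Complex.exp (-((n:ℂ) * (((u - 2*π*ω1 : ℝ)):ℂ)) * Complex.I) * F k u)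
              (x + 2*π*ω1) := by
        refine intervalIntegral.integral_congr fun x hx => ?_
        beta_reduce
        rw [add_sub_cancel_right]
      rw [step1, intervalIntegral.integral_comp_add_right
        (fun u : ℝ => Complex.exp (-((n:ℂ) * (((u - 2*π*ω1 : ℝ)):ℂ)) * Complex.I) * F k u)
        (2*π*ω1)]
      have e2 : (2*π:ℝ) + 2*π*ω1 = (0 + 2*π*ω1) + 2*π := by ring
      rw [e2, hχper.intervalIntegral_add_eq (0 + 2*π*ω1) 0, zero_add]
      rw [hCdef, ← intervalIntegral.integral_const_mul]
      refine intervalIntegral.integral_congr fun u hu => ?_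
      beta_reduce
      rw [← mul_assoc, ← Complex.exp_add]
      congr 2
      push_cast
      ring
    have h12 : Complex.exp (((n:ℂ) * ((2*π*ω1 : ℝ):ℂ)) * Complex.I) * C
        = Complex.exp (-((k:ℂ) * ((2*π*ω2 : ℝ):ℂ)) * Complex.I) * C := by
      rw [← way2, way1]
    have hne : Complex.exp (((n:ℂ) * ((2*π*ω1 : ℝ):ℂ)) * Complex.I)
        - Complex.exp (-((k:ℂ) * ((2*π*ω2 : ℝ):ℂ)) * Complex.I) ≠ 0 := by
      intro h0
      have heq0 : Complex.exp (((n:ℂ) * ((2*π*ω1 : ℝ):ℂ)) * Complex.I)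
          = Complex.exp (-((k:ℂ) * ((2*π*ω2 : ℝ):ℂ)) * Complex.I) := sub_eq_zero.mp h0
      have hone : Complex.exp (2 * (π:ℂ) * Complex.I * (((n:ℝ)*ω1 + (k:ℝ)*ω2 : ℝ):ℂ)) = 1 := by
        rw [show (2 * (π:ℂ) * Complex.I * (((n:ℝ)*ω1 + (k:ℝ)*ω2 : ℝ):ℂ))
            = (((n:ℂ) * ((2*π*ω1 : ℝ):ℂ)) * Complex.I)
              + (((k:ℂ) * ((2*π*ω2 : ℝ):ℂ)) * Complex.I) by push_cast; ring]
        rw [Complex.exp_add, heq0, ← Complex.exp_add]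
        simp
      exact exp_ne_one_aux (hnr n k hnk) hone
    have hzero : (Complex.exp (((n:ℂ) * ((2*π*ω1 : ℝ):ℂ)) * Complex.I)
        - Complex.exp (-((k:ℂ) * ((2*π*ω2 : ℝ):ℂ)) * Complex.I)) * C = 0 := by
      rw [sub_mul, h12, sub_self]
    rcases mul_eq_zero.mp hzero with h | h
    · exact absurd h hne
    · exact h
  have havg' : (∫ x in (0:ℝ)..(2*π), F 0 x) = 0 := by
    have hi : IntegrableOn (fun ψ : ℝ × ℝ => d ψ.1 ψ.2)
        ((Set.Icc (0:ℝ) (2*π)) ×ˢ (Set.Icc (0:ℝ) (2*π))) (volume.prod volume) := by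
      rw [← Measure.volume_eq_prod]
      exact hd.continuousOn.integrableOn_compact (isCompact_Icc.prod isCompact_Icc)
    have hprod := MeasureTheory.setIntegral_prod (μ := volume) (ν := volume)
      (fun ψ : ℝ × ℝ => d ψ.1 ψ.2) hi
    rw [← Measure.volume_eq_prod, havg] at hprod
    have hIccIoc : ∀ (f : ℝ → ℂ), (∫ t in (0:ℝ)..(2*π), f t) = ∫ t in Set.Icc (0:ℝ) (2*π), f t :=
      fun f => by rw [intervalIntegral.integral_of_le hπ.le, integral_Icc_eq_integral_Ioc]
    have hF0 : ∀ x : ℝ, F 0 x = ∫ y in Set.Icc (0:ℝ) (2*π), d x y := by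
      intro x
      rw [hFapp, hIccIoc fun y => Complex.exp (-(((0:ℤ):ℂ) * (y:ℝ)) * Complex.I) * d x y]
      refine setIntegral_congr_fun measurableSet_Icc fun y hy => ?_
      simp
    rw [hIccIoc (F 0)]
    rw [show (fun x => F 0 x) = fun x => ∫ y in Set.Icc (0:ℝ) (2*π), d x y from funext hF0]
    exact hprod.symm
  have hFzero : ∀ k : ℤ, ∀ x : ℝ, F k x = 0 := by
    intro k
    refine periodic_zero_of_fourier (F k) (hFcont k) (hFper k) ?_
    intro n
    by_cases hnk : n = 0 ∧ k = 0
    · obtain ⟨rfl, rfl⟩ := hnk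
      rw [← havg']
      refine intervalIntegral.integral_congr fun x hx => ?_
      simp
    · exact hCvan n k hnk
  intro x y
  have hcont : Continuous (d x) := hd.comp (Continuous.prodMk_right x)
  refine periodic_zero_of_fourier (d x) hcont (per2 x) (fun k => ?_) y
  rw [← hFapp k x]
  exact hFzero k x


/-- Uniqueness part of the cohomology lemma. -/
theorem cohomology_equation_uniqueness (l : ℝ) (hl0 : 0 < l) (hl1 : l < 1)
    (ω : ℝ × ℝ)
    (hnr : ∀ k : ℤ × ℤ, k ≠ 0 → ∀ m : ℤ, (k.1 : ℝ) * ω.1 + (k.2 : ℝ) * ω.2 + m ≠ 0)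
    (η g₁ g₂ : ℝ × ℝ → ℂ) (μ₁ μ₂ : ℂ)
    (hη : Continuous η)
    (hηper1 : ∀ ψ : ℝ × ℝ, η (ψ.1 + 2 * π, ψ.2) = η ψ)
    (hηper2 : ∀ ψ : ℝ × ℝ, η (ψ.1, ψ.2 + 2 * π) = η ψ)
    (hg₁ : Continuous g₁) (hg₂ : Continuous g₂)
    (hg₁per1 : ∀ ψ : ℝ × ℝ, g₁ (ψ.1 + 2 * π, ψ.2) = g₁ ψ)
    (hg₁per2 : ∀ ψ : ℝ × ℝ, g₁ (ψ.1, ψ.2 + 2 * π) = g₁ ψ)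
    (hg₂per1 : ∀ ψ : ℝ × ℝ, g₂ (ψ.1 + 2 * π, ψ.2) = g₂ ψ)
    (hg₂per2 : ∀ ψ : ℝ × ℝ, g₂ (ψ.1, ψ.2 + 2 * π) = g₂ ψ)
    (havg₁ : ∫ ψ in (Set.Icc (0:ℝ) (2 * π)) ×ˢ (Set.Icc (0:ℝ) (2 * π)), g₁ ψ = 0)
    (havg₂ : ∫ ψ in (Set.Icc (0:ℝ) (2 * π)) ×ˢ (Set.Icc (0:ℝ) (2 * π)), g₂ ψ = 0)
    (heq₁ : ∀ ψ : ℝ × ℝ,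
      g₁ (ψ.1 + 2 * π * ω.1, ψ.2 + 2 * π * ω.2) - (1 + (l : ℂ)) * g₁ ψ
        + (l : ℂ) * g₁ (ψ.1 - 2 * π * ω.1, ψ.2 - 2 * π * ω.2) - μ₁ = η ψ)
    (heq₂ : ∀ ψ : ℝ × ℝ,
      g₂ (ψ.1 + 2 * π * ω.1, ψ.2 + 2 * π * ω.2) - (1 + (l : ℂ)) * g₂ ψ
        + (l : ℂ) * g₂ (ψ.1 - 2 * π * ω.1, ψ.2 - 2 * π * ω.2) - μ₂ = η ψ) :
    μ₁ = μ₂ ∧ g₁ = g₂ := by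
  have hd : Continuous fun p : ℝ × ℝ => g₁ (p.1, p.2) - g₂ (p.1, p.2) := hg₁.sub hg₂
  have hnr' : ∀ n k : ℤ, ¬(n = 0 ∧ k = 0) → ∀ m : ℤ, (n:ℝ) * ω.1 + (k:ℝ) * ω.2 + m ≠ 0 := by
    intro n k hnk m
    have hk : ((n, k) : ℤ × ℤ) ≠ 0 := by
      simp only [Prod.ext_iff, Prod.fst_zero, Prod.snd_zero, ne_eq]
      exact hnk
    exact hnr (n, k) hk m
  have per1 : ∀ y : ℝ, Function.Periodic (fun x => g₁ (x, y) - g₂ (x, y)) (2*π) := by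
    intro y x
    have h1 : g₁ (x + 2*π, y) = g₁ (x, y) := hg₁per1 (x, y)
    have h2 : g₂ (x + 2*π, y) = g₂ (x, y) := hg₂per1 (x, y)
    simp only
    rw [h1, h2]
  have per2 : ∀ x : ℝ, Function.Periodic (fun y => g₁ (x, y) - g₂ (x, y)) (2*π) := by
    intro x y
    have h1 : g₁ (x, y + 2*π) = g₁ (x, y) := hg₁per2 (x, y)
    have h2 : g₂ (x, y + 2*π) = g₂ (x, y) := hg₂per2 (x, y)
    simp only
    rw [h1, h2]
  have havg : ∫ ψ in (Set.Icc (0:ℝ) (2*π)) ×ˢ (Set.Icc (0:ℝ) (2*π)),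
      (g₁ (ψ.1, ψ.2) - g₂ (ψ.1, ψ.2)) = 0 := by
    have hint1 : IntegrableOn g₁ ((Set.Icc (0:ℝ) (2*π)) ×ˢ (Set.Icc (0:ℝ) (2*π))) volume :=
      hg₁.continuousOn.integrableOn_compact (isCompact_Icc.prod isCompact_Icc)
    have hint2 : IntegrableOn g₂ ((Set.Icc (0:ℝ) (2*π)) ×ˢ (Set.Icc (0:ℝ) (2*π))) volume :=
      hg₂.continuousOn.integrableOn_compact (isCompact_Icc.prod isCompact_Icc)
    have : ∫ ψ in (Set.Icc (0:ℝ) (2*π)) ×ˢ (Set.Icc (0:ℝ) (2*π)), (g₁ ψ - g₂ ψ)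
        = (∫ ψ in (Set.Icc (0:ℝ) (2*π)) ×ˢ (Set.Icc (0:ℝ) (2*π)), g₁ ψ)
          - ∫ ψ in (Set.Icc (0:ℝ) (2*π)) ×ˢ (Set.Icc (0:ℝ) (2*π)), g₂ ψ :=
      integral_sub hint1 hint2
    rw [havg₁, havg₂, sub_zero] at this
    exact this
  have heq : ∀ x y : ℝ, (g₁ (x + 2*π*ω.1, y + 2*π*ω.2) - g₂ (x + 2*π*ω.1, y + 2*π*ω.2))
      - (1 + (l:ℂ)) * (g₁ (x, y) - g₂ (x, y))
      + (l:ℂ) * (g₁ (x - 2*π*ω.1, y - 2*π*ω.2) - g₂ (x - 2*π*ω.1, y - 2*π*ω.2)) = μ₁ - μ₂ := by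
    intro x y
    have h1 : g₁ (x + 2*π*ω.1, y + 2*π*ω.2) - (1 + (l:ℂ)) * g₁ (x, y)
        + (l:ℂ) * g₁ (x - 2*π*ω.1, y - 2*π*ω.2) - μ₁ = η (x, y) := heq₁ (x, y)
    have h2 : g₂ (x + 2*π*ω.1, y + 2*π*ω.2) - (1 + (l:ℂ)) * g₂ (x, y)
        + (l:ℂ) * g₂ (x - 2*π*ω.1, y - 2*π*ω.2) - μ₂ = η (x, y) := heq₂ (x, y)
    linear_combination h1 - h2
  obtain ⟨h0, hz⟩ := cohomology_aux l hl0 hl1 ω.1 ω.2 hnr'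
    (fun x y => g₁ (x, y) - g₂ (x, y)) (μ₁ - μ₂) hd per1 per2 havg heq
  constructor
  · exact sub_eq_zero.mp h0
  · funext ψ
    exact sub_eq_zero.mp (hz ψ.1 ψ.2)
end

section
/- The coupled 4D standard map satisfies the generalized conformal symplectic identity: let W : ℝ² → ℝ be twice continuously differentiable, let λ₁, λ₂, μ₁, μ₂, ε ∈ ℝ, and let F : ℝ⁴ → ℝ⁴ (coordinates ordered (y,x,w,z)) be given by y' = λ₁y + μ₁ + ε ∂W/∂x(x,z), x' = x + y', w' = λ₂w + μ₂ + ε ∂W/∂z(x,z), z' = z + w'. Then F is differentiable, and at every point its Jacobian matrix D satisfies Dᵀ · J · D = diag(λ₁ J₂, λ₂ J₂), where J₂ = [[0,1],[−1,0]] and J = diag(J₂, J₂) is the block-diagonal matrix with blocks J₂ acting on the (y,x) and (w,z) pairs. In particular, when λ₁ = λ₂ = 1 the map F is symplectic. -/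
/-!
The Jacobian of `F` has `2 × 2` blocks `Aᵢⱼ`, where the diagonal blocks have determinant `λᵢ`
and the off-diagonal ones have rank one. Expanding `Dᵀ J D` blockwise, the diagonal blocks give
`det Aᵢᵢ • J₂ = λᵢ J₂`, while the off-diagonal blocks reduce to `ε (∂ₓ∂_z W - ∂_z∂ₓ W)` in a single
entry, which vanishes by the symmetry of second derivatives.
-/

open Matrix

namespace StandardMap4D

noncomputable def standardMap (W : ℝ × ℝ → ℝ) (l₁ l₂ μ₁ μ₂ ε : ℝ) (p : Fin 4 → ℝ) : Fin 4 → ℝ :=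
  ![l₁ * p 0 + μ₁ + ε * fderiv ℝ W (p 1, p 3) (1, 0),
    p 1 + (l₁ * p 0 + μ₁ + ε * fderiv ℝ W (p 1, p 3) (1, 0)),
    l₂ * p 2 + μ₂ + ε * fderiv ℝ W (p 1, p 3) (0, 1),
    p 3 + (l₂ * p 2 + μ₂ + ε * fderiv ℝ W (p 1, p 3) (0, 1))]

def conformalSymplecticMatrix (l₁ l₂ : ℝ) : Matrix (Fin 4) (Fin 4) ℝ :=
  !![0, l₁, 0, 0; -l₁, 0, 0, 0; 0, 0, 0, l₂; 0, 0, -l₂, 0]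

noncomputable def hessian (W : ℝ × ℝ → ℝ) (q : ℝ × ℝ) : Matrix (Fin 2) (Fin 2) ℝ :=
  of fun i j => fderiv ℝ (fderiv ℝ W) q (![(1, 0), (0, 1)] i) (![(1, 0), (0, 1)] j)

theorem hessian_isSymm {W : ℝ × ℝ → ℝ} {q : ℝ × ℝ} (hW : ContDiffAt ℝ 2 W q) :
    (hessian W q).IsSymm :=
  Matrix.IsSymm.ext fun i j => (hW.isSymmSndFDerivAt (by simp) _ _).symm

def jacobian (l₁ l₂ ε : ℝ) (H : Matrix (Fin 2) (Fin 2) ℝ) : Matrix (Fin 4) (Fin 4) ℝ :=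
  !![l₁, ε * H 0 0, 0, ε * H 1 0;
     l₁, 1 + ε * H 0 0, 0, ε * H 1 0;
     0, ε * H 0 1, l₂, ε * H 1 1;
     0, ε * H 0 1, l₂, 1 + ε * H 1 1]

theorem jacobian_transpose_mul_mul {H : Matrix (Fin 2) (Fin 2) ℝ} (hH : H.IsSymm) (l₁ l₂ ε : ℝ) :
    (jacobian l₁ l₂ ε H)ᵀ * conformalSymplecticMatrix 1 1 * jacobian l₁ l₂ ε H =
      conformalSymplecticMatrix l₁ l₂ := by
  have h10 : H 1 0 = H 0 1 := hH.apply 0 1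
  ext i j
  fin_cases i <;> fin_cases j <;>
    simp [jacobian, conformalSymplecticMatrix, mul_apply, Fin.sum_univ_four, h10] <;> ring

theorem hasFDerivAt_fderiv_apply_pair {n : ℕ} {W : ℝ × ℝ → ℝ} {p : Fin n → ℝ} {i j : Fin n}
    (hW : DifferentiableAt ℝ (fderiv ℝ W) (p i, p j)) (v : ℝ × ℝ) :
    HasFDerivAt (fun p : Fin n → ℝ => fderiv ℝ W (p i, p j) v)
      (fderiv ℝ (fderiv ℝ W) (p i, p j) (1, 0) v •
          ContinuousLinearMap.proj (R := ℝ) (φ := fun _ => ℝ) i +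
        fderiv ℝ (fderiv ℝ W) (p i, p j) (0, 1) v • ContinuousLinearMap.proj j) p := by
  have h := ((ContinuousLinearMap.apply ℝ ℝ v).hasFDerivAt.comp _ hW.hasFDerivAt).comp p
    ((ContinuousLinearMap.proj (R := ℝ) (φ := fun _ : Fin n => ℝ) i).prod
      (ContinuousLinearMap.proj j)).hasFDerivAt
  refine h.congr_fderiv (ContinuousLinearMap.ext fun u => ?_)
  have hpair : ((u i, u j) : ℝ × ℝ) = u i • ((1 : ℝ), (0 : ℝ)) + u j • ((0 : ℝ), (1 : ℝ)) := by
    ext <;> simp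
  simp only [ContinuousLinearMap.coe_comp, Function.comp_apply, ContinuousLinearMap.prod_apply,
    ContinuousLinearMap.proj_apply, ContinuousLinearMap.apply_apply]
  rw [hpair, map_add, map_smul, map_smul]
  simp only [_root_.add_apply, _root_.smul_apply, smul_eq_mul, ContinuousLinearMap.proj_apply]
  ring

theorem hasFDerivAt_standardMap {W : ℝ × ℝ → ℝ} {p : Fin 4 → ℝ}
    (hW : DifferentiableAt ℝ (fderiv ℝ W) (p 1, p 3)) (l₁ l₂ μ₁ μ₂ ε : ℝ) :
    HasFDerivAt (standardMap W l₁ l₂ μ₁ μ₂ ε)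
      (LinearMap.toContinuousLinearMap
        (mulVecLin (jacobian l₁ l₂ ε (hessian W (p 1, p 3))))) p := by
  have hy := (((hasFDerivAt_apply 0 p).const_mul l₁).add_const μ₁).add
    ((hasFDerivAt_fderiv_apply_pair hW (1, 0)).const_mul ε)
  have hw := (((hasFDerivAt_apply 2 p).const_mul l₂).add_const μ₂).add
    ((hasFDerivAt_fderiv_apply_pair hW (0, 1)).const_mul ε)
  rw [hasFDerivAt_pi']
  intro i
  fin_cases i
  on_goal 1 => refine hy.congr_fderiv ?_
  on_goal 2 => refine ((hasFDerivAt_apply 1 p).add hy).congr_fderiv ?_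
  on_goal 3 => refine hw.congr_fderiv ?_
  on_goal 4 => refine ((hasFDerivAt_apply 3 p).add hw).congr_fderiv ?_
  all_goals
    refine ContinuousLinearMap.ext fun v => ?_
    simp [jacobian, hessian, dotProduct, Fin.sum_univ_four]
    ring

end StandardMap4D

/-- The coupled 4D standard map satisfies the generalized conformal symplectic identity;
in particular it is symplectic when both conformal factors equal 1. -/
theorem coupled_4D_standard_map_conformal_identity
    (W : ℝ × ℝ → ℝ) (hW : ContDiff ℝ 2 W) (l₁ l₂ μ₁ μ₂ ε : ℝ) :
    let Wx : ℝ × ℝ → ℝ := fun q => fderiv ℝ W q (1, 0)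
    let Wz : ℝ × ℝ → ℝ := fun q => fderiv ℝ W q (0, 1)
    let F : (Fin 4 → ℝ) → (Fin 4 → ℝ) := fun p =>
      ![l₁ * p 0 + μ₁ + ε * Wx (p 1, p 3),
        p 1 + (l₁ * p 0 + μ₁ + ε * Wx (p 1, p 3)),
        l₂ * p 2 + μ₂ + ε * Wz (p 1, p 3),
        p 3 + (l₂ * p 2 + μ₂ + ε * Wz (p 1, p 3))]
    -- block-diagonal symplectic matrix J = diag(J₂, J₂) with J₂ = [[0,1],[-1,0]]
    let J : Matrix (Fin 4) (Fin 4) ℝ :=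
      !![0, 1, 0, 0; -1, 0, 0, 0; 0, 0, 0, 1; 0, 0, -1, 0]
    -- diag(λ₁ J₂, λ₂ J₂)
    let JΛ : Matrix (Fin 4) (Fin 4) ℝ :=
      !![0, l₁, 0, 0; -l₁, 0, 0, 0; 0, 0, 0, l₂; 0, 0, -l₂, 0]
    (∀ p : Fin 4 → ℝ, ∃ D : Matrix (Fin 4) (Fin 4) ℝ,
      HasFDerivAt F (LinearMap.toContinuousLinearMap (Matrix.mulVecLin D)) p ∧
      Dᵀ * J * D = JΛ) ∧
    (l₁ = 1 → l₂ = 1 →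
      ∀ p : Fin 4 → ℝ, ∃ D : Matrix (Fin 4) (Fin 4) ℝ,
        HasFDerivAt F (LinearMap.toContinuousLinearMap (Matrix.mulVecLin D)) p ∧
        Dᵀ * J * D = J) := by
  intro Wx Wz F J JΛ
  have conformal : ∀ p : Fin 4 → ℝ, ∃ D : Matrix (Fin 4) (Fin 4) ℝ,
      HasFDerivAt F (LinearMap.toContinuousLinearMap (Matrix.mulVecLin D)) p ∧
      Dᵀ * J * D = JΛ := fun p =>
    ⟨StandardMap4D.jacobian l₁ l₂ ε (StandardMap4D.hessian W (p 1, p 3)),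
      StandardMap4D.hasFDerivAt_standardMap
        ((hW.fderiv_right le_rfl).differentiable one_ne_zero _) l₁ l₂ μ₁ μ₂ ε,
      StandardMap4D.jacobian_transpose_mul_mul
        (StandardMap4D.hessian_isSymm hW.contDiffAt) l₁ l₂ ε⟩
  refine ⟨conformal, fun hl₁ hl₂ p => ?_⟩
  subst hl₁ hl₂
  exact conformal p
end

section
/- Pairing rule for conformally symplectic matrices: let n ∈ ℕ, let M, J be n×n complex matrices with J invertible, and let λ ∈ ℂ with λ ≠ 0 be such that Mᵀ J M = λ J. Then M is invertible, and for every χ ∈ ℂ with χ ≠ 0, χ is a root of the characteristic polynomial of M if and only if λ/χ is a root of the characteristic polynomial of M. -/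
open Matrix Polynomial

private lemma eval_charpoly_det {n : ℕ} (M : Matrix (Fin n) (Fin n) ℂ) (t : ℂ) :
    M.charpoly.eval t = (t • (1 : Matrix (Fin n) (Fin n) ℂ) - M).det := by
  rw [Matrix.charpoly, ← Polynomial.coe_evalRingHom, RingHom.map_det]
  congr 1
  ext i j
  simp [Matrix.charmatrix_apply, Matrix.one_apply, Matrix.smul_apply]
  split <;> simp_all [Matrix.diagonal_apply]

/-- Pairing rule for conformally symplectic matrices: the eigenvalues of a conformally
symplectic matrix with conformal factor λ come in pairs (χ, λ/χ). -/
theorem conformally_symplectic_pairing_rule (n : ℕ)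
    (M J : Matrix (Fin n) (Fin n) ℂ) (hJ : IsUnit J) (l : ℂ) (hl : l ≠ 0)
    (h : Mᵀ * J * M = l • J) :
    IsUnit M ∧
    ∀ χ : ℂ, χ ≠ 0 → (M.charpoly.IsRoot χ ↔ M.charpoly.IsRoot (l / χ)) := by
  have hJd : J.det ≠ 0 := by
    simpa [isUnit_iff_ne_zero] using hJ.map (Matrix.detMonoidHom (n := Fin n) (R := ℂ))
  have hdet : M.det * J.det * M.det = l ^ n * J.det := by
    have := congrArg Matrix.det h
    simpa [Matrix.det_mul, Matrix.det_transpose, Matrix.det_smul] using this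
  have hMd : M.det ≠ 0 := by
    intro h0
    apply pow_ne_zero n hl
    have : l ^ n * J.det = 0 := by rw [← hdet, h0]; ring
    exact (mul_eq_zero.mp this).resolve_right hJd
  have hM : IsUnit M := by
    rw [Matrix.isUnit_iff_isUnit_det, isUnit_iff_ne_zero]; exact hMd
  refine ⟨hM, fun χ hχ => ?_⟩
  -- key determinant identity
  have hMinv : M * M⁻¹ = 1 := Matrix.mul_nonsing_inv M (isUnit_iff_ne_zero.mpr hMd)
  have hMinv' : M⁻¹ * M = 1 := Matrix.nonsing_inv_mul M (isUnit_iff_ne_zero.mpr hMd)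
  have hJinv : J⁻¹ * J = 1 := Matrix.nonsing_inv_mul J (isUnit_iff_ne_zero.mpr hJd)
  have hJinv' : J * J⁻¹ = 1 := Matrix.mul_nonsing_inv J (isUnit_iff_ne_zero.mpr hJd)
  have hMT : J⁻¹ * Mᵀ * J = l • M⁻¹ := by
    have h1 : Mᵀ * J = l • (J * M⁻¹) := by
      calc Mᵀ * J = (Mᵀ * J * M) * M⁻¹ := by rw [Matrix.mul_assoc, hMinv, Matrix.mul_one]
        _ = l • (J * M⁻¹) := by rw [h, Matrix.smul_mul]
    calc J⁻¹ * Mᵀ * J = J⁻¹ * (Mᵀ * J) := by rw [Matrix.mul_assoc]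
      _ = J⁻¹ * (l • (J * M⁻¹)) := by rw [h1]
      _ = l • (J⁻¹ * J * M⁻¹) := by rw [Matrix.mul_smul, Matrix.mul_assoc]
      _ = l • M⁻¹ := by rw [hJinv, Matrix.one_mul]
  have key : ∀ t : ℂ, t ≠ 0 →
      (t • (1 : Matrix (Fin n) (Fin n) ℂ) - M).det
        = M⁻¹.det * (-t) ^ n * ((l / t) • (1 : Matrix (Fin n) (Fin n) ℂ) - M).det := by
    intro t ht
    have e1 : (t • (1 : Matrix (Fin n) (Fin n) ℂ) - M).det
        = (t • (1 : Matrix (Fin n) (Fin n) ℂ) - Mᵀ).det := by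
      rw [← Matrix.det_transpose (t • 1 - M)]
      congr 1
      simp [Matrix.transpose_sub, Matrix.transpose_smul]
    have hJJ : J⁻¹.det * J.det = 1 := by
      rw [← Matrix.det_mul, hJinv, Matrix.det_one]
    have e2 : J⁻¹ * (t • (1 : Matrix (Fin n) (Fin n) ℂ) - Mᵀ) * J
        = t • (1 : Matrix (Fin n) (Fin n) ℂ) - l • M⁻¹ := by
      rw [Matrix.mul_sub, Matrix.sub_mul, hMT, Matrix.mul_smul, Matrix.mul_one,
        Matrix.smul_mul, hJinv]
    have e3 : (t • (1 : Matrix (Fin n) (Fin n) ℂ) - Mᵀ).det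
        = (t • (1 : Matrix (Fin n) (Fin n) ℂ) - l • M⁻¹).det := by
      have hd := congrArg Matrix.det e2
      rw [Matrix.det_mul, Matrix.det_mul] at hd
      calc (t • (1 : Matrix (Fin n) (Fin n) ℂ) - Mᵀ).det
          = (J⁻¹.det * J.det) * (t • (1 : Matrix (Fin n) (Fin n) ℂ) - Mᵀ).det := by
            rw [hJJ, one_mul]
        _ = J⁻¹.det * (t • (1 : Matrix (Fin n) (Fin n) ℂ) - Mᵀ).det * J.det := by ring
        _ = _ := hd
    have e4 : t • (1 : Matrix (Fin n) (Fin n) ℂ) - l • M⁻¹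
        = M⁻¹ * ((-t) • ((l / t) • (1 : Matrix (Fin n) (Fin n) ℂ) - M)) := by
      symm
      calc M⁻¹ * ((-t) • ((l / t) • (1 : Matrix (Fin n) (Fin n) ℂ) - M))
          = (-t) • (M⁻¹ * ((l / t) • (1 : Matrix (Fin n) (Fin n) ℂ) - M)) := by
            rw [Matrix.mul_smul]
        _ = (-t) • ((l / t) • M⁻¹ - 1) := by
            rw [Matrix.mul_sub, Matrix.mul_smul, Matrix.mul_one, hMinv']
        _ = t • (1 : Matrix (Fin n) (Fin n) ℂ) - l • M⁻¹ := by
            rw [smul_sub, smul_smul]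
            have hlt : -t * (l / t) = -l := by field_simp
            rw [hlt]; match_scalars <;> ring
    rw [e1, e3, e4, Matrix.det_mul, Matrix.det_smul, Fintype.card_fin]
    ring
  have hMinvd : M⁻¹.det ≠ 0 := by
    intro h0
    have := Matrix.det_mul M⁻¹ M
    rw [hMinv', Matrix.det_one, h0, zero_mul] at this
    exact one_ne_zero this
  constructor
  · intro hr
    have := key χ hχ
    rw [Polynomial.IsRoot, eval_charpoly_det] at hr ⊢
    rw [hr] at this
    rcases mul_eq_zero.mp this.symm with h1 | h1
    · rcases mul_eq_zero.mp h1 with h2 | h2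
      · exact absurd h2 hMinvd
      · exact absurd h2 (pow_ne_zero n (neg_ne_zero.mpr hχ))
    · exact h1
  · intro hr
    have := key χ hχ
    rw [Polynomial.IsRoot, eval_charpoly_det] at hr ⊢
    rw [this, hr, mul_zero]
end

section
/- The spiral-mean frequency vector is Diophantine: let s be the unique real root of x³ − x − 1 = 0 (so 1 < s < 2), and let ω_s = (s − 1, s^{−1}) ∈ ℝ². Then there exist ν > 0 and τ ≥ 1 such that |k₁(s−1) + k₂ s^{−1} + m| ≥ ν (max(|k₁|,|k₂|))^{−τ} for every (k₁,k₂) ∈ ℤ² \ {0} and every m ∈ ℤ. -/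
set_option maxHeartbeats 1000000

/-- The norm form of ℤ[s] for s the spiral mean: N(a,b,c) = Norm(a s² + b s + c). -/
private def Nf (a b c : ℤ) : ℤ :=
  a^3 + b^3 + c^3 - 3*a*b*c + a^2*c - a^2*b + 2*a*c^2 - b^2*c

private lemma Nf_mod2 (a b c : ℤ) (h : Nf a b c = 0) : 2 ∣ a ∧ 2 ∣ b ∧ 2 ∣ c := by
  have hd : ∀ x y z : ZMod 2,
      x^3 + y^3 + z^3 - 3*x*y*z + x^2*z - x^2*y + 2*x*z^2 - y^2*z = 0 →
      x = 0 ∧ y = 0 ∧ z = 0 := by decide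
  have h2 : ((Nf a b c : ℤ) : ZMod 2) = 0 := by rw [h]; simp
  unfold Nf at h2
  push_cast at h2
  obtain ⟨h1, h2, h3⟩ := hd a b c h2
  exact ⟨(ZMod.intCast_zmod_eq_zero_iff_dvd a 2).mp h1,
    (ZMod.intCast_zmod_eq_zero_iff_dvd b 2).mp h2,
    (ZMod.intCast_zmod_eq_zero_iff_dvd c 2).mp h3⟩

private lemma Nf_ne_zero_aux : ∀ n : ℕ, ∀ a b c : ℤ,
    a.natAbs + b.natAbs + c.natAbs ≤ n → ¬(a = 0 ∧ b = 0 ∧ c = 0) → Nf a b c ≠ 0 := by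
  intro n
  induction n with
  | zero => intro a b c hn h; exfalso; apply h; omega
  | succ n ih =>
    intro a b c hn h hN
    obtain ⟨⟨a', rfl⟩, ⟨b', rfl⟩, ⟨c', rfl⟩⟩ := Nf_mod2 a b c hN
    have h8 : Nf (2*a') (2*b') (2*c') = 8 * Nf a' b' c' := by unfold Nf; ring
    have hN' : Nf a' b' c' = 0 := by rw [h8] at hN; linarith
    have h' : ¬(a' = 0 ∧ b' = 0 ∧ c' = 0) := by
      intro ⟨h1, h2, h3⟩; exact h ⟨by omega, by omega, by omega⟩
    have hle : a'.natAbs + b'.natAbs + c'.natAbs ≤ n := by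
      have hpos : a'.natAbs + b'.natAbs + c'.natAbs ≠ 0 := by
        intro h0; apply h'; omega
      omega
    exact ih a' b' c' hle h' hN'

private lemma Nf_ne_zero (a b c : ℤ) (h : ¬(a = 0 ∧ b = 0 ∧ c = 0)) : Nf a b c ≠ 0 :=
  Nf_ne_zero_aux (a.natAbs + b.natAbs + c.natAbs) a b c le_rfl h

private lemma abs_sub' (x y : ℝ) : |x - y| ≤ |x| + |y| := by
  rw [sub_eq_add_neg]
  simpa using abs_add_le x (-y)

private lemma key_bound (s : ℝ) (hs : s ^ 3 - s - 1 = 0) (hs1 : 1 < s) (hs2 : s < 2)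
    (a b c : ℤ) (hab : ¬(a = 0 ∧ b = 0)) (K : ℝ) (hK1 : 1 ≤ K)
    (haK : |(a:ℝ)| ≤ K) (hbK : |(b:ℝ)| ≤ K) :
    1/90 * (K^2)⁻¹ ≤ |(a:ℝ)*s^2 + (b:ℝ)*s + (c:ℝ)| := by
  have hKpos : (0:ℝ) < K := lt_of_lt_of_le one_pos hK1
  set L : ℝ := (a:ℝ)*s^2 + (b:ℝ)*s + (c:ℝ) with hL
  set Q : ℝ := (a:ℝ)^2*(s^2-1)^2 - (a:ℝ)*b + (a:ℝ)*c*(2 - s^2)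
      + (b:ℝ)^2*(s^2-1) - (b:ℝ)*c*s + (c:ℝ)^2 with hQ
  have hNQ : L * Q = (Nf a b c : ℝ) := by
    rw [hL, hQ]
    unfold Nf
    push_cast
    linear_combination ((b:ℝ)^3 - 2*(a:ℝ)*b*c - (a:ℝ)^2*b + (a:ℝ)^3 + (a:ℝ)*(b:ℝ)^2*s
      - (a:ℝ)^3*s + (a:ℝ)^2*(b:ℝ)*s^2 + (a:ℝ)^3*s^3) * hs
  have habc : ¬(a = 0 ∧ b = 0 ∧ c = 0) := fun ⟨h1, h2, _⟩ => hab ⟨h1, h2⟩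
  have hNne := Nf_ne_zero a b c habc
  have hN1 : (1:ℝ) ≤ |(Nf a b c : ℝ)| := by
    rw [← Int.cast_abs]
    exact_mod_cast Int.one_le_abs hNne
  have hLQ1 : 1 ≤ |L| * |Q| := by rw [← abs_mul, hNQ]; exact hN1
  rcases le_or_gt (1/90 : ℝ) |L| with hcase | hcase
  · have hK2 : (1:ℝ) ≤ K^2 := by nlinarith
    have hi : (K^2)⁻¹ ≤ 1 := by
      rw [inv_le_one_iff₀]; right; exact hK2
    nlinarith [abs_nonneg L]
  · -- |L| < 1/90
    have hA4 : |(a:ℝ)*s^2| ≤ 4*K := by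
      rw [abs_mul, abs_of_nonneg (by positivity : (0:ℝ) ≤ s^2)]
      nlinarith [abs_nonneg (a:ℝ)]
    have hB2 : |(b:ℝ)*s| ≤ 2*K := by
      rw [abs_mul, abs_of_nonneg (by linarith : (0:ℝ) ≤ s)]
      nlinarith [abs_nonneg (b:ℝ)]
    have hc7 : |(c:ℝ)| ≤ 7*K := by
      have e : (c:ℝ) = L - (a:ℝ)*s^2 - (b:ℝ)*s := by rw [hL]; ring
      rw [e]
      calc |L - (a:ℝ)*s^2 - (b:ℝ)*s|
          ≤ |L - (a:ℝ)*s^2| + |(b:ℝ)*s| := abs_sub' _ _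
        _ ≤ (|L| + |(a:ℝ)*s^2|) + |(b:ℝ)*s| := by
            have := abs_sub' L ((a:ℝ)*s^2); linarith
        _ ≤ 7*K := by linarith
    have hA2 : (a:ℝ)^2 ≤ K^2 := by nlinarith [abs_nonneg (a:ℝ), sq_abs (a:ℝ)]
    have hB2' : (b:ℝ)^2 ≤ K^2 := by nlinarith [abs_nonneg (b:ℝ), sq_abs (b:ℝ)]
    have hC2 : (c:ℝ)^2 ≤ 49*K^2 := by nlinarith [abs_nonneg (c:ℝ), sq_abs (c:ℝ)]
    have h9 : (s^2-1)^2 ≤ 9 := by nlinarith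
    have hT1 : (a:ℝ)^2*(s^2-1)^2 ≤ 9*K^2 := by
      nlinarith [sq_nonneg (a:ℝ), sq_nonneg (s^2-1)]
    have hT1' : 0 ≤ (a:ℝ)^2*(s^2-1)^2 := by positivity
    have hTab : |(a:ℝ)*b| ≤ K^2 := by
      rw [abs_mul, sq]
      exact mul_le_mul haK hbK (abs_nonneg _) hKpos.le
    have hTac : |(a:ℝ)*c| ≤ 7*K^2 := by
      rw [abs_mul]
      calc |(a:ℝ)| * |(c:ℝ)| ≤ K * (7*K) :=
            mul_le_mul haK hc7 (abs_nonneg _) hKpos.le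
        _ = 7*K^2 := by ring
    have hTbc : |(b:ℝ)*c| ≤ 7*K^2 := by
      rw [abs_mul]
      calc |(b:ℝ)| * |(c:ℝ)| ≤ K * (7*K) :=
            mul_le_mul hbK hc7 (abs_nonneg _) hKpos.le
        _ = 7*K^2 := by ring
    have hs2' : |2 - s^2| ≤ 2 := by
      rw [abs_le]; constructor <;> nlinarith
    have hT3 : |(a:ℝ)*c*(2-s^2)| ≤ 14*K^2 := by
      rw [abs_mul]
      calc |(a:ℝ)*c| * |2-s^2| ≤ (7*K^2) * 2 :=
            mul_le_mul hTac hs2' (abs_nonneg _) (by positivity)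
        _ = 14*K^2 := by ring
    have hT4 : (b:ℝ)^2*(s^2-1) ≤ 3*K^2 := by
      nlinarith [sq_nonneg (b:ℝ)]
    have hT4' : 0 ≤ (b:ℝ)^2*(s^2-1) := by nlinarith [sq_nonneg (b:ℝ)]
    have hQle : |Q| ≤ 90*K^2 := by
      rw [hQ, abs_le]
      constructor
      · have h1 := le_abs_self ((a:ℝ)*b)
        have h2 := neg_abs_le ((a:ℝ)*c*(2-s^2))
        have h3 := le_abs_self ((b:ℝ)*c*s)
        have h4 : |(b:ℝ)*c*s| ≤ 14*K^2 := by
          rw [abs_mul, abs_of_nonneg (by linarith : (0:ℝ) ≤ s)]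
          calc |(b:ℝ)*c| * s ≤ (7*K^2) * 2 :=
                mul_le_mul hTbc (le_of_lt hs2) (by linarith) (by positivity)
            _ = 14*K^2 := by ring
        have h5 := sq_nonneg (c:ℝ)
        nlinarith
      · have h1 := neg_abs_le ((a:ℝ)*b)
        have h2 := le_abs_self ((a:ℝ)*c*(2-s^2))
        have h3 := neg_abs_le ((b:ℝ)*c*s)
        have h4 : |(b:ℝ)*c*s| ≤ 14*K^2 := by
          rw [abs_mul, abs_of_nonneg (by linarith : (0:ℝ) ≤ s)]
          calc |(b:ℝ)*c| * s ≤ (7*K^2) * 2 :=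
                mul_le_mul hTbc (le_of_lt hs2) (by linarith) (by positivity)
            _ = 14*K^2 := by ring
        nlinarith
    have h1 : 1 ≤ |L| * (90*K^2) :=
      le_trans hLQ1 (mul_le_mul_of_nonneg_left hQle (abs_nonneg L))
    rw [show (1:ℝ)/90 * (K^2)⁻¹ = 1/(90*K^2) by ring]
    rw [div_le_iff₀ (by positivity)]
    linarith

/-- The spiral-mean frequency vector ω_s = (s − 1, s⁻¹) is Diophantine, where s is the
unique real root of x³ − x − 1 = 0 (so 1 < s < 2). -/
theorem spiral_mean_vector_diophantine (s : ℝ) (hs : s ^ 3 - s - 1 = 0)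
    (hs1 : 1 < s) (hs2 : s < 2) :
    ∃ ν : ℝ, 0 < ν ∧ ∃ τ : ℝ, 1 ≤ τ ∧
      ∀ k : ℤ × ℤ, k ≠ 0 → ∀ m : ℤ,
        ν * (((max k.1.natAbs k.2.natAbs) : ℕ) : ℝ) ^ (-τ) ≤
          |(k.1 : ℝ) * (s - 1) + (k.2 : ℝ) * s⁻¹ + m| := by
  refine ⟨1/90, by norm_num, 2, by norm_num, ?_⟩
  intro k hk m
  have hs0 : s ≠ 0 := by linarith
  have hinv : s⁻¹ = s^2 - 1 := by
    field_simp
    nlinarith [hs]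
  have hk12 : k.1 ≠ 0 ∨ k.2 ≠ 0 := by
    by_contra hcon
    push_neg at hcon
    exact hk (Prod.ext hcon.1 hcon.2)
  have hK1n : 1 ≤ max k.1.natAbs k.2.natAbs := by rcases hk12 with h | h <;> omega
  have hK1 : (1:ℝ) ≤ ((max k.1.natAbs k.2.natAbs : ℕ) : ℝ) := by exact_mod_cast hK1n
  have hKpos : (0:ℝ) < ((max k.1.natAbs k.2.natAbs : ℕ) : ℝ) := lt_of_lt_of_le one_pos hK1
  have haK : |((k.2 : ℤ) : ℝ)| ≤ ((max k.1.natAbs k.2.natAbs : ℕ) : ℝ) := by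
    rw [show |((k.2 : ℤ) : ℝ)| = ((k.2.natAbs : ℕ) : ℝ) by
      rw [Nat.cast_natAbs, Int.cast_abs]]
    exact_mod_cast le_max_right k.1.natAbs k.2.natAbs
  have hbK : |((k.1 : ℤ) : ℝ)| ≤ ((max k.1.natAbs k.2.natAbs : ℕ) : ℝ) := by
    rw [show |((k.1 : ℤ) : ℝ)| = ((k.1.natAbs : ℕ) : ℝ) by
      rw [Nat.cast_natAbs, Int.cast_abs]]
    exact_mod_cast le_max_left k.1.natAbs k.2.natAbs
  have hab : ¬(k.2 = 0 ∧ k.1 = 0) := by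
    intro ⟨h1, h2⟩
    rcases hk12 with h | h
    · exact h h2
    · exact h h1
  have hkey := key_bound s hs hs1 hs2 k.2 k.1 (m - k.1 - k.2) hab
    ((max k.1.natAbs k.2.natAbs : ℕ) : ℝ) hK1 haK hbK
  have hLeq : ((k.2:ℤ):ℝ)*s^2 + ((k.1:ℤ):ℝ)*s + (((m - k.1 - k.2 : ℤ)):ℝ)
      = (k.1 : ℝ) * (s - 1) + (k.2 : ℝ) * s⁻¹ + m := by
    rw [hinv]; push_cast; ring
  rw [hLeq] at hkey
  have hr : ((max k.1.natAbs k.2.natAbs : ℕ) : ℝ) ^ (-(2:ℝ))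
      = (((max k.1.natAbs k.2.natAbs : ℕ) : ℝ)^2)⁻¹ := by
    rw [Real.rpow_neg hKpos.le, show (2:ℝ) = ((2:ℕ):ℝ) by norm_num, Real.rpow_natCast]
  rw [hr]
  linarith
end
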